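/- arXiv:2301.05807 — 3 statements merged into one kernel-verified Lean document; each statement's English description precedes it below -/
import Mathlib

section
/- Let α ∈ ℝ, let I ⊆ ℝ be an open interval, and let q : I → ℝ be a smooth nonvanishing solution of PIV(α) on I. Define σ(x) := (q(x) − 𝓗(x))/2 and ν := α + 1/2. Then σ satisfies the σ-form of the fourth Painlevé equation on I: (σ''(x))² + 4(σ'(x))²·(σ'(x) + 2ν) − 4(x·σ'(x) − σ(x))² = 0 for all x ∈ I. -/
open Real Filter Set Asymptotics MeasureTheory

noncomputable section

/-- The fourth Painlevé equation PIV(α) at a point `x`: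
`q'' = (q')²/(2q) + (3/2)q³ + 4xq² + 2(x²-2α)q`. -/
def PIVEq (α : ℝ) (q : ℝ → ℝ) (x : ℝ) : Prop :=
  deriv (deriv q) x =
    (deriv q x) ^ 2 / (2 * q x) + (3 / 2) * (q x) ^ 3 + 4 * x * (q x) ^ 2 +
      2 * (x ^ 2 - 2 * α) * q x

/-- The Hamiltonian associated with a solution `q` of PIV(α):
`𝓗(x) = q³/4 + xq² + (x²-2α)q - (q')²/(4q)`. -/
def Ham (α : ℝ) (q : ℝ → ℝ) (x : ℝ) : ℝ :=
  (q x) ^ 3 / 4 + x * (q x) ^ 2 + (x ^ 2 - 2 * α) * q x - (deriv q x) ^ 2 / (4 * q x)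

/-- The σ-function `σ = (q - 𝓗)/2` associated with a solution `q` of PIV(α). -/
def sigmaFn (α : ℝ) (q : ℝ → ℝ) : ℝ → ℝ := fun x => (q x - Ham α q x) / 2

/-!
Along a solution of PIV(α) the `q''` term in `𝓗'` cancels against the equation, leaving
`𝓗' = q² + 2xq`. Hence `σ' = (q' - q² - 2xq)/2` and `σ'' = (q'' - 2qq' - 2q - 2xq')/2`;
after eliminating `q''` once more with PIV(α), the σ-form becomes a rational identity in
`x`, `q` and `q'` with denominator a power of `q`.
-/

section

variable {α x : ℝ} {q : ℝ → ℝ}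

theorem hasDerivAt_Ham_of_PIVEq (hq : DifferentiableAt ℝ q x)
    (hq' : DifferentiableAt ℝ (deriv q) x) (h0 : q x ≠ 0) (hpiv : PIVEq α q x) :
    HasDerivAt (Ham α q) (q x ^ 2 + 2 * x * q x) x := by
  have h := ((((hq.hasDerivAt.pow 3).div_const 4).add
    ((hasDerivAt_id x).mul (hq.hasDerivAt.pow 2))).add
    (((hasDerivAt_pow 2 x).sub_const (2 * α)).mul hq.hasDerivAt)).sub
    ((hq'.hasDerivAt.pow 2).div (hq.hasDerivAt.const_mul 4) (mul_ne_zero four_ne_zero h0))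
  refine h.congr_deriv ?_
  simp only [Pi.pow_apply, id, Nat.cast_ofNat]
  rw [hpiv]
  field_simp
  push_cast
  ring

theorem hasDerivAt_sigmaFn_of_PIVEq (hq : DifferentiableAt ℝ q x)
    (hq' : DifferentiableAt ℝ (deriv q) x) (h0 : q x ≠ 0) (hpiv : PIVEq α q x) :
    HasDerivAt (sigmaFn α q) ((deriv q x - q x ^ 2 - 2 * x * q x) / 2) x :=
  ((hq.hasDerivAt.sub (hasDerivAt_Ham_of_PIVEq hq hq' h0 hpiv)).div_const 2).congr_deriv
    (by ring)

end

section

variable {α : ℝ} {I : Set ℝ} {q : ℝ → ℝ}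

theorem ContDiffOn.differentiableAt_deriv_of_isOpen (hI : IsOpen I) (hq : ContDiffOn ℝ 2 q I)
    {x : ℝ} (hx : x ∈ I) : DifferentiableAt ℝ (deriv q) x :=
  ((hq.deriv_of_isOpen hI (by norm_num : (1 : WithTop ℕ∞) + 1 ≤ 2)).contDiffAt
    (hI.mem_nhds hx)).differentiableAt one_ne_zero

theorem deriv_sigmaFn_eqOn (hI : IsOpen I) (hq : ContDiffOn ℝ 2 q I) (h0 : ∀ x ∈ I, q x ≠ 0)
    (hpiv : ∀ x ∈ I, PIVEq α q x) :
    EqOn (deriv (sigmaFn α q)) (fun x => (deriv q x - q x ^ 2 - 2 * x * q x) / 2) I :=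
  fun x hx => (hasDerivAt_sigmaFn_of_PIVEq ((hq.contDiffAt (hI.mem_nhds hx)).differentiableAt
    (by norm_num)) (hq.differentiableAt_deriv_of_isOpen hI hx) (h0 x hx) (hpiv x hx)).deriv

theorem deriv_deriv_sigmaFn_eq (hI : IsOpen I) (hq : ContDiffOn ℝ 2 q I)
    (h0 : ∀ x ∈ I, q x ≠ 0) (hpiv : ∀ x ∈ I, PIVEq α q x) {x : ℝ} (hx : x ∈ I) :
    deriv (deriv (sigmaFn α q)) x =
      (deriv (deriv q) x - 2 * q x * deriv q x - 2 * q x - 2 * x * deriv q x) / 2 := by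
  have hqx : HasDerivAt q (deriv q x) x :=
    ((hq.contDiffAt (hI.mem_nhds hx)).differentiableAt (by norm_num)).hasDerivAt
  have hσ' := ((((hq.differentiableAt_deriv_of_isOpen hI hx).hasDerivAt).sub (hqx.pow 2)).sub
    (((hasDerivAt_id x).const_mul 2).mul hqx)).div_const 2
  rw [((deriv_sigmaFn_eqOn hI hq h0 hpiv).eventuallyEq_of_mem (hI.mem_nhds hx)).deriv_eq]
  exact (hσ'.congr_deriv (by simp only [id, Nat.cast_ofNat]; ring)).deriv

end

theorem piv_sigma_form_general (α : ℝ) (I : Set ℝ) (hI : IsOpen I)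
    (q : ℝ → ℝ) (hsm : ContDiffOn ℝ (⊤ : ℕ∞) q I) (hq0 : ∀ x ∈ I, q x ≠ 0)
    (hpiv : ∀ x ∈ I, PIVEq α q x) :
    ∀ x ∈ I,
      (deriv (deriv (sigmaFn α q)) x) ^ 2 +
        4 * (deriv (sigmaFn α q) x) ^ 2 * (deriv (sigmaFn α q) x + 2 * (α + 1 / 2)) -
        4 * (x * deriv (sigmaFn α q) x - sigmaFn α q x) ^ 2 = 0 := by
  intro x hx
  have hq : ContDiffOn ℝ 2 q I := hsm.of_le (WithTop.coe_le_coe.mpr le_top)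
  have hq0x := hq0 x hx
  rw [deriv_deriv_sigmaFn_eq hI hq hq0 hpiv hx, deriv_sigmaFn_eqOn hI hq hq0 hpiv hx, hpiv x hx]
  simp only [sigmaFn, Ham]
  field_simp
  ring

theorem piv_sigma_form (α : ℝ) (I : Set ℝ) (hI : IsOpen I) (hI' : I.OrdConnected)
    (q : ℝ → ℝ) (hsm : ContDiffOn ℝ (⊤ : ℕ∞) q I) (hq0 : ∀ x ∈ I, q x ≠ 0)
    (hpiv : ∀ x ∈ I, PIVEq α q x) :
    ∀ x ∈ I,
      (deriv (deriv (sigmaFn α q)) x) ^ 2 +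
        4 * (deriv (sigmaFn α q) x) ^ 2 * (deriv (sigmaFn α q) x + 2 * (α + 1 / 2)) -
        4 * (x * deriv (sigmaFn α q) x - sigmaFn α q x) ^ 2 = 0 :=
  piv_sigma_form_general α I hI q hsm hq0 hpiv
end
end

section
/- Let α ∈ ℝ, let I ⊆ ℝ be an open interval, and let q, p : I → ℝ be smooth functions with q nonvanishing on I. If (q,p) satisfies the Hamilton equations q'(x) = ∂H/∂p = p(x)·q(x) and p'(x) = −∂H/∂q = (3/2)q(x)² + 4x·q(x) + 2(x²−2α) − p(x)²/2 associated with the Hamiltonian H(x,q,p) = −q³/2 − 2xq² − 2(x²−2α)q + p²q/2, then q solves PIV(α) on I. -/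
open Real Filter Set Asymptotics MeasureTheory

noncomputable section

theorem piv_from_hamilton_equations (α : ℝ) (I : Set ℝ) (hI : IsOpen I)
    (hI' : I.OrdConnected) (q p : ℝ → ℝ)
    (hq : ContDiffOn ℝ (⊤ : ℕ∞) q I) (hp : ContDiffOn ℝ (⊤ : ℕ∞) p I)
    (hq0 : ∀ x ∈ I, q x ≠ 0)
    (h1 : ∀ x ∈ I, deriv q x = p x * q x)
    (h2 : ∀ x ∈ I, deriv p x =
      (3 / 2) * (q x) ^ 2 + 4 * x * q x + 2 * (x ^ 2 - 2 * α) - (p x) ^ 2 / 2) :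
    ∀ x ∈ I, PIVEq α q x := by
  intro x hx
  have hmem : I ∈ nhds x := hI.mem_nhds hx
  have hqd : DifferentiableAt ℝ q x :=
    (hq.differentiableOn (by norm_num)).differentiableAt hmem
  have hpd : DifferentiableAt ℝ p x :=
    (hp.differentiableOn (by norm_num)).differentiableAt hmem
  have heq : deriv q =ᶠ[nhds x] fun y => p y * q y :=
    Filter.eventuallyEq_of_mem hmem h1
  have hderiv2 : deriv (deriv q) x = deriv (fun y => p y * q y) x :=
    heq.deriv_eq
  have hprod : deriv (fun y => p y * q y) x = deriv p x * q x + p x * deriv q x :=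
    deriv_mul hpd hqd
  have hq0x := hq0 x hx
  unfold PIVEq
  rw [hderiv2, hprod, h1 x hx, h2 x hx]
  field_simp
  ring
end
end

section
/- Let κ ∈ ℝ ∖ {0} and define erfc(x) := (2/√π)·∫_x^{∞} e^{−t²} dt. Then on the open set U := {x ∈ ℝ : 2 − κ√π·erfc(x) ≠ 0}, the function q(x) := 2κ·e^{−x²}/(2 − κ√π·erfc(x)) is smooth, nonvanishing, solves PIV(1/2) on U, and satisfies q(x) = κ·e^{−x²}·(1 + O(x^{−2})) as x → +∞. -/
/-!
With `D x = 2 - κ√π·erfc x` we have `D' = 2κe^{-x²}` and `D'' = -2x·D'`, so `q = D'/D`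
solves the Riccati equation `q' = -2xq - q²`. Differentiating the Riccati equation once more
and eliminating `x` shows that every nonvanishing solution of it solves PIV(1/2). For the
asymptotics, `q / (κe^{-x²}) = 2 / D = 1 + κ√π·erfc x / D x`, and `erfc x ≤ e^{-x²}/√π` for
`x ≥ 1` while `D → 2`, so the error term is `O(e^{-x²})`, a fortiori `O(x⁻²)`.
-/

open Real Filter Set Asymptotics MeasureTheory

noncomputable section

/-- The complementary error function `erfc(x) = (2/√π) ∫_x^∞ e^{-t²} dt`. -/
def erfc (x : ℝ) : ℝ := (2 / Real.sqrt π) * ∫ t in Ioi x, Real.exp (-t ^ 2)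

open Topology

theorem hasDerivAt_integral_Ioi {E : Type*} [NormedAddCommGroup E] [NormedSpace ℝ E]
    [CompleteSpace E] {f : ℝ → E} (hf : Integrable f) (hc : Continuous f) (x : ℝ) :
    HasDerivAt (fun y => ∫ t in Ioi y, f t) (-f x) x := by
  have h : (fun y => ∫ t in Ioi y, f t) =
      fun y => (∫ t in Ioi 0, f t) - ∫ t in (0 : ℝ)..y, f t := by
    funext y
    rw [← intervalIntegral.integral_Ioi_sub_Ioi' hf.integrableOn hf.integrableOn, sub_sub_cancel]
  rw [h]
  exact (intervalIntegral.integral_hasDerivAt_right hf.intervalIntegrable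
    (hc.stronglyMeasurableAtFilter _ _) hc.continuousAt).const_sub _

theorem hasDerivAt_exp_neg_sq (x : ℝ) :
    HasDerivAt (fun t => exp (-t ^ 2)) (-2 * x * exp (-x ^ 2)) x := by
  have h : HasDerivAt (fun t : ℝ => -t ^ 2) (-2 * x) x := by
    simpa [Pi.neg_def] using (hasDerivAt_pow 2 x).neg
  convert h.exp using 1
  ring

theorem integrable_exp_neg_sq : Integrable fun t : ℝ => exp (-t ^ 2) := by
  simpa using integrable_exp_neg_mul_sq one_pos

theorem hasDerivAt_erfc (x : ℝ) : HasDerivAt erfc (-(2 / √π) * exp (-x ^ 2)) x :=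
  ((hasDerivAt_integral_Ioi integrable_exp_neg_sq (by fun_prop) x).const_mul
    (2 / √π)).congr_deriv (by ring)

theorem contDiff_erfc : ContDiff ℝ (⊤ : ℕ∞) erfc := by
  rw [contDiff_infty_iff_deriv]
  refine ⟨fun x => (hasDerivAt_erfc x).differentiableAt, ?_⟩
  rw [funext fun x => (hasDerivAt_erfc x).deriv]
  fun_prop

theorem erfc_nonneg (x : ℝ) : 0 ≤ erfc x :=
  mul_nonneg (by positivity) (setIntegral_nonneg measurableSet_Ioi fun t _ => (exp_pos _).le)

theorem integral_Ioi_mul_exp_neg_sq (x : ℝ) :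
    ∫ t in Ioi x, t * exp (-t ^ 2) = exp (-x ^ 2) / 2 := by
  have hF (t : ℝ) : HasDerivAt (fun t => -exp (-t ^ 2) / 2) (t * exp (-t ^ 2)) t :=
    ((hasDerivAt_exp_neg_sq t).neg.div_const 2).congr_deriv (by ring)
  have hlim : Tendsto (fun t : ℝ => -exp (-t ^ 2) / 2) atTop (𝓝 0) := by
    have := (tendsto_exp_atBot.comp (tendsto_neg_atTop_atBot.comp
      (tendsto_pow_atTop two_ne_zero))).neg.div_const 2
    simpa using this
  have hint : IntegrableOn (fun t : ℝ => t * exp (-t ^ 2)) (Ioi x) := by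
    simpa using (integrable_mul_exp_neg_mul_sq one_pos).integrableOn
  rw [integral_Ioi_of_hasDerivAt_of_tendsto' (fun t _ => hF t) hint hlim, zero_sub, neg_div,
    neg_neg]

theorem erfc_le_exp_neg_sq {x : ℝ} (hx : 1 ≤ x) : erfc x ≤ exp (-x ^ 2) / √π := by
  have hmono : ∫ t in Ioi x, exp (-t ^ 2) ≤ ∫ t in Ioi x, t * exp (-t ^ 2) := by
    refine setIntegral_mono_on integrable_exp_neg_sq.integrableOn ?_ measurableSet_Ioi
      fun t ht => le_mul_of_one_le_left (exp_pos _).le (hx.trans (le_of_lt ht))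
    simpa using (integrable_mul_exp_neg_mul_sq one_pos).integrableOn
  rw [integral_Ioi_mul_exp_neg_sq] at hmono
  rw [erfc, div_mul_eq_mul_div]
  gcongr
  linarith

theorem erfc_isBigO_exp_neg_sq : erfc =O[atTop] fun x => exp (-x ^ 2) := by
  refine IsBigO.of_bound (1 / √π) ?_
  filter_upwards [eventually_ge_atTop 1] with x hx
  rw [norm_of_nonneg (erfc_nonneg x), norm_of_nonneg (exp_pos _).le]
  linarith [erfc_le_exp_neg_sq hx, div_eq_mul_one_div (exp (-x ^ 2)) √π]

theorem tendsto_erfc_atTop : Tendsto erfc atTop (𝓝 0) :=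
  erfc_isBigO_exp_neg_sq.trans_tendsto <| tendsto_exp_atBot.comp
    (tendsto_neg_atTop_atBot.comp (tendsto_pow_atTop two_ne_zero))

theorem exp_neg_sq_isLittleO_rpow (s : ℝ) : (fun x => exp (-x ^ 2)) =o[atTop] (· ^ s) := by
  simpa using rexp_neg_quadratic_isLittleO_rpow_atTop neg_one_lt_zero 0 s

theorem riccati_hasDerivAt_div {D D' : ℝ → ℝ} {x : ℝ}
    (hD : HasDerivAt D (D' x) x) (hD' : HasDerivAt D' (-2 * x * D' x) x) (hx : D x ≠ 0) :
    HasDerivAt (fun y => D' y / D y) (-2 * x * (D' x / D x) - (D' x / D x) ^ 2) x := by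
  refine (hD'.fun_div hD hx).congr_deriv ?_
  field_simp

theorem pivEq_half_of_riccati {q : ℝ → ℝ} {U : Set ℝ} (hU : IsOpen U)
    (hq : ∀ y ∈ U, HasDerivAt q (-2 * y * q y - q y ^ 2) y) {x : ℝ} (hx : x ∈ U)
    (hqx : q x ≠ 0) : PIVEq (1 / 2) q x := by
  have hderiv : deriv q =ᶠ[𝓝 x] fun y => -2 * y * q y - q y ^ 2 :=
    eventually_of_mem (hU.mem_nhds hx) fun y hy => (hq y hy).deriv
  have hq' := hq x hx
  have hq'' : HasDerivAt (fun y => -2 * y * q y - q y ^ 2)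
      (-2 * q x + -2 * x * (-2 * x * q x - q x ^ 2) - 2 * q x * (-2 * x * q x - q x ^ 2)) x := by
    refine ((((hasDerivAt_id x).const_mul (-2)).fun_mul hq').fun_sub
      (hq'.fun_pow 2)).congr_deriv ?_
    simp only [id]
    ring
  rw [PIVEq, hderiv.deriv_eq, hq''.deriv, hq'.deriv]
  field_simp
  ring

theorem piv_explicit_solution_error_function (κ : ℝ) (hκ : κ ≠ 0) :
    IsOpen {x : ℝ | 2 - κ * Real.sqrt π * erfc x ≠ 0} ∧
    ContDiffOn ℝ (⊤ : ℕ∞)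
      (fun x : ℝ => 2 * κ * Real.exp (-x ^ 2) / (2 - κ * Real.sqrt π * erfc x))
      {x : ℝ | 2 - κ * Real.sqrt π * erfc x ≠ 0} ∧
    (∀ x ∈ {x : ℝ | 2 - κ * Real.sqrt π * erfc x ≠ 0},
      2 * κ * Real.exp (-x ^ 2) / (2 - κ * Real.sqrt π * erfc x) ≠ 0) ∧
    (∀ x ∈ {x : ℝ | 2 - κ * Real.sqrt π * erfc x ≠ 0},
      PIVEq (1 / 2)
        (fun x : ℝ => 2 * κ * Real.exp (-x ^ 2) / (2 - κ * Real.sqrt π * erfc x)) x) ∧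
    ∃ E : ℝ → ℝ, (E =O[atTop] fun x : ℝ => x ^ (-2 : ℝ)) ∧
      ∀ᶠ x : ℝ in atTop,
        2 * κ * Real.exp (-x ^ 2) / (2 - κ * Real.sqrt π * erfc x) =
          κ * Real.exp (-x ^ 2) * (1 + E x) := by
  set D : ℝ → ℝ := fun x => 2 - κ * √π * erfc x
  have hD (x : ℝ) : HasDerivAt D (2 * κ * exp (-x ^ 2)) x :=
    (((hasDerivAt_erfc x).const_mul (κ * √π)).const_sub 2).congr_deriv <| by
      field_simp [(sqrt_pos.mpr pi_pos).ne']
  have hD' (x : ℝ) :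
      HasDerivAt (fun y => 2 * κ * exp (-y ^ 2)) (-2 * x * (2 * κ * exp (-x ^ 2))) x :=
    ((hasDerivAt_exp_neg_sq x).const_mul (2 * κ)).congr_deriv (by ring)
  have hD_smooth : ContDiff ℝ (⊤ : ℕ∞) D := contDiff_const.sub (contDiff_const.mul contDiff_erfc)
  have hU : IsOpen {x | D x ≠ 0} := isOpen_ne_fun hD_smooth.continuous continuous_const
  have hq_ne (x : ℝ) (hx : D x ≠ 0) : 2 * κ * exp (-x ^ 2) / D x ≠ 0 :=
    div_ne_zero (by positivity) hx
  have hD_lim : Tendsto D atTop (𝓝 2) := by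
    simpa using (tendsto_erfc_atTop.const_mul (κ * √π)).const_sub 2
  refine ⟨hU, ?_, hq_ne, fun x hx => pivEq_half_of_riccati hU
    (fun y hy => riccati_hasDerivAt_div (hD y) (hD' y) hy) hx (hq_ne x hx),
    fun x => κ * √π * erfc x / D x, ?_, ?_⟩
  · exact (contDiff_const.mul (by fun_prop)).contDiffOn.div hD_smooth.contDiffOn
      fun x hx => hx
  · have hD_inv : (fun x => (D x)⁻¹) =O[atTop] fun _ => (1 : ℝ) :=
      (hD_lim.inv₀ two_ne_zero).isBigO_one ℝ
    have hE := (erfc_isBigO_exp_neg_sq.const_mul_left (κ * √π)).mul hD_inv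
    simp only [mul_one] at hE
    simpa [div_eq_mul_inv] using hE.trans (exp_neg_sq_isLittleO_rpow (-2)).isBigO
  · filter_upwards [hD_lim.eventually_ne two_ne_zero] with x hx
    simp only [D] at hx ⊢
    field_simp
    ring
end
end
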